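/- arXiv:1610.04756 — 4 statements merged into one kernel-verified Lean document; each statement's English description precedes it below -/
import Mathlib

section
/- Let $(k,l)$ be a pair of locally integrable kernels on $(0,\infty)$ with $k \ast l = 1$ on $(0,\infty)$. For $\gamma \in \mathbb{R}$, let $s_\gamma$ and $r_\gamma$ be locally integrable solutions of the Volterra equations $s_\gamma(t) + \gamma(l \ast s_\gamma)(t) = 1$ and $r_\gamma(t) + \gamma(l \ast r_\gamma)(t) = l(t)$ for $t > 0$. Then $s_\gamma = k \ast r_\gamma$ almost everywhere on $(0,\infty)$. -/
open MeasureTheory Real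

noncomputable def conv (f g : ℝ → ℝ) (t : ℝ) : ℝ := ∫ τ in (0:ℝ)..t, f (t - τ) * g τ

section SkrAux

open Set Filter ContinuousLinearMap

noncomputable def star' (f g : ℝ → ℝ) : ℝ → ℝ := convolution f g (ContinuousLinearMap.mul ℝ ℝ) volume

lemma star'_apply (f g : ℝ → ℝ) (x : ℝ) : star' f g x = ∫ τ, f τ * g (x - τ) := rfl

lemma star'_comm (f g : ℝ → ℝ) (x : ℝ) : star' f g x = star' g f x := by
  rw [star'_apply, star'_apply, ← integral_sub_left_eq_self (fun τ => g τ * f (x - τ)) volume x]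
  congr 1; funext τ; rw [sub_sub_cancel]; ring

lemma star'_zero {f g : ℝ → ℝ} (hf : ∀ x ≤ 0, f x = 0) (hg : ∀ x ≤ 0, g x = 0)
    {t : ℝ} (ht : t ≤ 0) : star' f g t = 0 := by
  rw [star'_apply]
  rw [show (0:ℝ) = ∫ (_ : ℝ), (0:ℝ) ∂(volume : Measure ℝ) by simp]
  congr 1; funext τ
  rcases le_or_gt τ 0 with h | h
  · rw [hf τ h, zero_mul]
  · rw [hg (t - τ) (by linarith), mul_zero]

lemma ae_integrable_conv {f g : ℝ → ℝ} (hf : Integrable f) (hg : Integrable g) :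
    ∀ᵐ x ∂(volume : Measure ℝ), Integrable (fun τ => f τ * g (x - τ)) := by
  have := hf.ae_convolution_exists (L := mul ℝ ℝ) hg
  filter_upwards [this] with x hx
  simpa [ConvolutionExistsAt, ContinuousLinearMap.mul_apply'] using hx

lemma star'_assoc {f g h : ℝ → ℝ} (hf : Integrable f) (hg : Integrable g) (hh : Integrable h) :
    ∀ᵐ t ∂(volume : Measure ℝ), star' (star' f g) h t = star' f (star' g h) t := by
  have hgk : ∀ᵐ x ∂(volume : Measure ℝ),
      ConvolutionExistsAt (fun x => ‖g x‖) (fun x => ‖h x‖) x (mul ℝ ℝ) volume :=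
    hg.norm.ae_convolution_exists (L := mul ℝ ℝ) hh.norm
  have hfg : ∀ᵐ y ∂(volume : Measure ℝ), ConvolutionExistsAt f g y (mul ℝ ℝ) volume :=
    hf.ae_convolution_exists (L := mul ℝ ℝ) hg
  have hfgk := hf.norm.ae_convolution_exists (L := mul ℝ ℝ)
    (hg.norm.integrable_convolution (mul ℝ ℝ) hh.norm)
  filter_upwards [hfgk] with t ht
  exact convolution_assoc (mul ℝ ℝ) (mul ℝ ℝ) (mul ℝ ℝ) (mul ℝ ℝ)
    (fun x y z => mul_assoc x y z) hf.aestronglyMeasurable hg.aestronglyMeasurable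
    hh.aestronglyMeasurable hfg hgk ht



lemma conv_eq_star' {f g : ℝ → ℝ} (hf : ∀ x ≤ 0, f x = 0) (hg : ∀ x ≤ 0, g x = 0)
    {t : ℝ} (ht : 0 < t) : conv f g t = star' f g t := by
  have h1 : conv f g t = ∫ τ in (0:ℝ)..t, f τ * g (t - τ) := by
    have := intervalIntegral.integral_comp_sub_left (fun σ => f σ * g (t - σ)) t (a := 0) (b := t)
    simp only [sub_zero, sub_self] at this
    rw [conv, ← this]
    congr 1; funext τ; rw [sub_sub_cancel]
  rw [h1, star'_apply, intervalIntegral.integral_of_le ht.le]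
  refine setIntegral_eq_integral_of_forall_compl_eq_zero fun x hx => ?_
  simp only [mem_Ioc, not_and_or, not_lt, not_le] at hx
  rcases hx with h | h
  · rw [hf x h, zero_mul]
  · rw [hg (t - x) (by linarith), mul_zero]

lemma conv_trunc (f g : ℝ → ℝ) (T : ℝ) {t : ℝ} (ht : t ∈ Set.Ioc 0 T) :
    conv f g t = conv ((Set.Ioc 0 T).indicator f) ((Set.Ioc 0 T).indicator g) t := by
  rw [conv, conv, intervalIntegral.integral_of_le ht.1.le, intervalIntegral.integral_of_le ht.1.le,
    integral_Ioc_eq_integral_Ioo, integral_Ioc_eq_integral_Ioo]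
  refine (setIntegral_congr_fun measurableSet_Ioo fun τ hτ => ?_).symm
  rw [Set.indicator_of_mem (show t - τ ∈ Set.Ioc 0 T by
        constructor <;> [linarith [hτ.1, hτ.2]; linarith [hτ.1, hτ.2, ht.2]]) f,
    Set.indicator_of_mem (show τ ∈ Set.Ioc 0 T from ⟨hτ.1, le_trans hτ.2.le ht.2⟩) g]

lemma exists_small_delta (L : ℝ → ℝ) (hL : Integrable L) (γ : ℝ) :
    ∃ δ > (0:ℝ), |γ| * ∫ x in Set.Ioc 0 δ, |L x| ≤ 1/2 := by
  have habs : Integrable (fun x => |L x|) := hL.abs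
  have tend : Tendsto (fun n : ℕ => ∫ x in Set.Ioc (0:ℝ) (1/(n+1)), |L x|) atTop (nhds 0) := by
    have : ∀ n : ℕ, ∫ x in Set.Ioc (0:ℝ) (1/(n+1)), |L x|
        = ∫ x, (Set.Ioc (0:ℝ) (1/(n+1))).indicator (fun x => |L x|) x := by
      intro n; rw [integral_indicator measurableSet_Ioc]
    simp_rw [this]
    have main := tendsto_integral_of_dominated_convergence (μ := (volume : Measure ℝ))
      (F := fun (n:ℕ) => (Set.Ioc (0:ℝ) (1/(n+1))).indicator (fun x => |L x|))
      (f := fun _ => (0:ℝ)) (bound := fun x => |L x|)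
      (fun n => habs.aestronglyMeasurable.indicator measurableSet_Ioc) habs ?_ ?_
    · simpa using main
    · intro n
      filter_upwards with x
      simpa using norm_indicator_le_norm_self (fun x => |L x|) x
    · filter_upwards with x
      rcases le_or_gt x 0 with hx | hx
      · have : ∀ n : ℕ, (Set.Ioc (0:ℝ) (1/(n+1))).indicator (fun x => |L x|) x = 0 := by
          intro n; exact Set.indicator_of_notMem (fun h => absurd h.1 (not_lt.2 hx)) _
        simp_rw [this]; exact tendsto_const_nhds
      · obtain ⟨n, hn⟩ := exists_nat_one_div_lt hx
        refine tendsto_const_nhds.congr' ?_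
        filter_upwards [eventually_ge_atTop n] with m hm
        refine (Set.indicator_of_notMem (fun hmem => ?_) _).symm
        have : (1:ℝ)/(m+1) ≤ 1/(n+1) := by
          apply one_div_le_one_div_of_le <;> [positivity; exact_mod_cast by linarith [hm]]
        exact absurd hmem.2 (not_le.2 (lt_of_le_of_lt this hn))
  have tend2 : Tendsto (fun n : ℕ => |γ| * ∫ x in Set.Ioc (0:ℝ) (1/(n+1)), |L x|) atTop (nhds 0) := by
    simpa using tend.const_mul |γ|
  have := tend2.eventually_le_const (by norm_num : (0:ℝ) < 1/2)
  obtain ⟨n, hn⟩ := this.exists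
  exact ⟨1/(n+1), by positivity, hn⟩

lemma uniq (L U : ℝ → ℝ) (hL : Integrable L) (hU : Integrable U)
    (hLs : ∀ x ≤ 0, L x = 0) (hUs : ∀ x ≤ 0, U x = 0) (γ T : ℝ)
    (heq : ∀ᵐ t ∂(volume.restrict (Set.Ioc 0 T)), U t + γ * star' L U t = 0) :
    ∀ᵐ t ∂(volume.restrict (Set.Ioc 0 T)), U t = 0 := by
  rcases le_or_gt T 0 with hT | hT
  · rw [Set.Ioc_eq_empty (not_lt.mpr hT), Measure.restrict_empty]
    simp
  obtain ⟨δ, hδ, hc⟩ := exists_small_delta L hL γ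
  -- J is the small L¹ norm of L near 0
  set J : ℝ := ∫ x in Set.Ioc (0:ℝ) δ, |L x| with hJ
  have hP : ∀ n : ℕ, ∀ᵐ t ∂(volume.restrict (Set.Ioc 0 (min (n * δ) T))), U t = 0 := by
    intro n
    induction n with
    | zero =>
      have : Set.Ioc (0:ℝ) (min ((0:ℕ) * δ) T) = ∅ := by
        apply Set.Ioc_eq_empty; simp
      rw [this, Measure.restrict_empty]
      simp
    | succ n ih =>
      set a : ℝ := min (n * δ) T with ha
      set b : ℝ := min ((n + 1 : ℕ) * δ) T with hb
      have ha0 : 0 ≤ a := le_min (by positivity) hT.le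
      have hab : a ≤ b := min_le_min (by push_cast; nlinarith) le_rfl
      have hbT : b ≤ T := min_le_right _ _
      have hba : b - a ≤ δ := by
        have : b ≤ a + δ := by
          have h1 : ((n+1:ℕ):ℝ) * δ = n * δ + δ := by push_cast; ring
          have h2 : T ≤ T + δ := by linarith
          calc b ≤ min (n * δ + δ) (T + δ) := by
                rw [hb, h1]; exact min_le_min le_rfl h2
            _ = a + δ := by rw [ha, min_add_add_right]
        linarith
      -- show U = 0 a.e. on Ioc a b
      have hstep : ∀ᵐ t ∂(volume.restrict (Set.Ioc a b)), U t = 0 := by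
        set Uh : ℝ → ℝ := (Set.Ioc a b).indicator (fun x => |U x|) with hUh
        set Lh : ℝ → ℝ := (Set.Ioc 0 δ).indicator (fun x => |L x|) with hLh
        have hUhi : Integrable Uh := hU.abs.indicator measurableSet_Ioc
        have hLhi : Integrable Lh := hL.abs.indicator measurableSet_Ioc
        have hUhnn : ∀ x, 0 ≤ Uh x := fun x =>
          Set.indicator_nonneg (fun y _ => abs_nonneg _) x
        have hLhnn : ∀ x, 0 ≤ Lh x := fun x =>
          Set.indicator_nonneg (fun y _ => abs_nonneg _) x
        have hCi : Integrable (star' Uh Lh) := hUhi.integrable_convolution (mul ℝ ℝ) hLhi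
        have hCex := ae_integrable_conv hUhi hLhi
        -- U =ᵐ Ū with Ū vanishing on (-∞, a]
        have hUeq : U =ᵐ[volume] (Set.Ioi a).indicator U := by
          have h0 := ae_imp_of_ae_restrict ih
          filter_upwards [h0] with x hx
          by_cases hxa : a < x
          · rw [Set.indicator_of_mem (Set.mem_Ioi.mpr hxa) U]
          · rw [Set.indicator_of_notMem (by simpa using hxa) U]
            push_neg at hxa
            rcases le_or_gt x 0 with hx0 | hx0
            · exact hUs x hx0
            · exact hx ⟨hx0, hxa⟩
        have heq' : ∀ᵐ t ∂(volume.restrict (Set.Ioc a b)), U t + γ * star' L U t = 0 :=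
          ae_restrict_of_ae_restrict_of_subset (Set.Ioc_subset_Ioc ha0 hbT) heq
        have hCex' : ∀ᵐ t ∂(volume.restrict (Set.Ioc a b)),
            Integrable (fun τ => Uh τ * Lh (t - τ)) :=
          hCex.filter_mono (ae_mono Measure.restrict_le_self)
        have hmem := ae_restrict_mem (μ := (volume : Measure ℝ)) (measurableSet_Ioc : MeasurableSet (Set.Ioc a b))
        have hbound : ∀ᵐ t ∂(volume.restrict (Set.Ioc a b)),
            |U t| ≤ |γ| * star' Uh Lh t := by
          filter_upwards [heq', hCex', hmem] with t ht hint htm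
          have h1 : U t = -(γ * star' L U t) := by linarith
          have h2 : star' L U t = ∫ τ, ((Set.Ioi a).indicator U) τ * L (t - τ) := by
            rw [star'_comm, star'_apply]
            exact integral_congr_ae (hUeq.mono fun τ hτ => by simp only [hτ])
          have hpt : ∀ τ, |((Set.Ioi a).indicator U) τ * L (t - τ)| ≤ Uh τ * Lh (t - τ) := by
            intro τ
            by_cases hτa : a < τ
            · rw [Set.indicator_of_mem (Set.mem_Ioi.mpr hτa) U]
              by_cases htτ : t - τ ≤ 0
              · rw [hLs (t - τ) htτ, mul_zero, abs_zero]
                exact mul_nonneg (hUhnn τ) (hLhnn (t - τ))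
              · push_neg at htτ
                have hτb : τ ∈ Set.Ioc a b := ⟨hτa, by linarith [htm.2]⟩
                have htτδ : t - τ ∈ Set.Ioc (0:ℝ) δ :=
                  ⟨htτ, by linarith [htm.2, hba]⟩
                rw [abs_mul, hUh, hLh, Set.indicator_of_mem hτb, Set.indicator_of_mem htτδ]
            · rw [Set.indicator_of_notMem (by simpa using hτa) U, zero_mul, abs_zero]
              exact mul_nonneg (hUhnn τ) (hLhnn (t - τ))
          have h3 : |star' L U t| ≤ star' Uh Lh t := by
            calc |star' L U t| = ‖∫ τ, ((Set.Ioi a).indicator U) τ * L (t - τ)‖ := by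
                  rw [h2, Real.norm_eq_abs]
              _ ≤ ∫ τ, ‖((Set.Ioi a).indicator U) τ * L (t - τ)‖ :=
                  norm_integral_le_integral_norm _
              _ ≤ star' Uh Lh t := by
                  rw [star'_apply]
                  refine integral_mono_of_nonneg (Eventually.of_forall fun τ => norm_nonneg _)
                    hint (Eventually.of_forall fun τ => ?_)
                  simpa [Real.norm_eq_abs, abs_mul] using hpt τ
          calc |U t| = |γ| * |star' L U t| := by rw [h1, abs_neg, abs_mul]
            _ ≤ |γ| * star' Uh Lh t := mul_le_mul_of_nonneg_left h3 (abs_nonneg γ)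
        set I : ℝ := ∫ t in Set.Ioc a b, |U t| with hI
        have hInn : 0 ≤ I := setIntegral_nonneg measurableSet_Ioc fun x _ => abs_nonneg _
        have step1 : I ≤ |γ| * ∫ t in Set.Ioc a b, star' Uh Lh t := by
          have h := integral_mono_ae (hU.abs.restrict) ((hCi.const_mul |γ|).restrict) hbound
          rwa [integral_const_mul] at h
        have hCnn : ∀ t, 0 ≤ star' Uh Lh t := fun t => by
          rw [star'_apply]
          exact integral_nonneg fun τ => mul_nonneg (hUhnn τ) (hLhnn (t - τ))
        have step2 : ∫ t in Set.Ioc a b, star' Uh Lh t ≤ ∫ t, star' Uh Lh t :=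
          setIntegral_le_integral hCi (Eventually.of_forall hCnn)
        have step3 : ∫ t, star' Uh Lh t = I * J := by
          have h := integral_convolution (mul ℝ ℝ) hUhi hLhi
          simp only [ContinuousLinearMap.mul_apply'] at h
          rw [show star' Uh Lh = convolution Uh Lh (mul ℝ ℝ) volume from rfl, h,
            hUh, hLh, integral_indicator measurableSet_Ioc, integral_indicator measurableSet_Ioc]
        have hIle : I ≤ (|γ| * J) * I := by
          have : I ≤ |γ| * (I * J) :=
            step1.trans (mul_le_mul_of_nonneg_left (step2.trans_eq step3) (abs_nonneg γ))
          nlinarith [this]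
        have hI0 : I = 0 := by nlinarith [mul_le_mul_of_nonneg_right hc hInn]
        have hae0 := (integral_eq_zero_iff_of_nonneg_ae
          (Eventually.of_forall fun t => abs_nonneg (U t)) (hU.abs.restrict)).mp hI0
        filter_upwards [hae0] with t ht
        exact abs_eq_zero.mp ht
      -- combine
      have hsplit : Set.Ioc (0:ℝ) b = Set.Ioc 0 a ∪ Set.Ioc a b :=
        (Set.Ioc_union_Ioc_eq_Ioc ha0 hab).symm
      rw [hsplit]
      rw [ae_restrict_union_iff]
      exact ⟨ih, hstep⟩
  obtain ⟨n, hn⟩ := exists_nat_ge (T / δ)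
  have hTn : T ≤ n * δ := by
    rw [div_le_iff₀ hδ] at hn; linarith
  have hPn := hP n
  rwa [min_eq_right hTn] at hPn



lemma key' (γ T : ℝ) (K L S R : ℝ → ℝ)
    (hKi : Integrable K) (hLi : Integrable L) (hSi : Integrable S) (hRi : Integrable R)
    (sK : ∀ x ≤ (0:ℝ), K x = 0) (sL : ∀ x ≤ (0:ℝ), L x = 0)
    (sS : ∀ x ≤ (0:ℝ), S x = 0) (sR : ∀ x ≤ (0:ℝ), R x = 0)
    (sL' : ∀ x, T < x → L x = 0) (sR' : ∀ x, T < x → R x = 0)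
    (h1 : ∀ t ∈ Set.Ioc (0:ℝ) T, star' K L t = 1)
    (hSeq : ∀ᵐ t ∂(volume.restrict (Set.Ioc 0 T)), S t + γ * star' L S t = 1)
    (hReq : ∀ᵐ t ∂(volume.restrict (Set.Ioc 0 T)), R t + γ * star' L R t = L t) :
    ∀ᵐ t ∂(volume.restrict (Set.Ioc 0 T)), S t = star' K R t := by
  have hVi : Integrable (star' K R) := hKi.integrable_convolution (mul ℝ ℝ) hRi
  have hVs : ∀ x ≤ (0:ℝ), star' K R x = 0 := fun x hx => star'_zero sK sR hx
  have hLRi : Integrable (star' L R) := hLi.integrable_convolution (mul ℝ ℝ) hRi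
  have hW2i : Integrable ((Set.Ioc (0:ℝ) T).indicator (star' L R)) :=
    hLRi.indicator measurableSet_Ioc
  -- R agrees a.e. with the indicator of (L - γ · L⋆R)
  have hRW : R =ᵐ[volume]
      (Set.Ioc (0:ℝ) T).indicator (fun τ => L τ - γ * star' L R τ) := by
    filter_upwards [ae_imp_of_ae_restrict hReq] with τ hτ
    by_cases hmem : τ ∈ Set.Ioc (0:ℝ) T
    · rw [Set.indicator_of_mem hmem]
      have := hτ hmem; linarith
    · rw [Set.indicator_of_notMem hmem]
      simp only [Set.mem_Ioc, not_and_or, not_lt, not_le] at hmem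
      rcases hmem with h | h
      · exact sR τ h
      · exact sR' τ h
  -- (ii) : V = 1 - γ * (L⋆R)⋆K on (0,T]
  have hii : ∀ᵐ t ∂(volume.restrict (Set.Ioc 0 T)),
      star' K R t = 1 - γ * star' (star' L R) K t := by
    have e1 := (ae_integrable_conv hLi hKi).filter_mono
      (ae_mono (Measure.restrict_le_self (s := Set.Ioc (0:ℝ) T)))
    have e2 := (ae_integrable_conv hW2i hKi).filter_mono
      (ae_mono (Measure.restrict_le_self (s := Set.Ioc (0:ℝ) T)))
    filter_upwards [e1, e2, ae_restrict_mem (μ := (volume : Measure ℝ))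
      (measurableSet_Ioc : MeasurableSet (Set.Ioc (0:ℝ) T))] with t e1t e2t htm
    have hVt : star' K R t = ∫ τ, R τ * K (t - τ) := by rw [star'_comm, star'_apply]
    have step : (∫ τ, R τ * K (t - τ))
        = ∫ τ, (L τ * K (t - τ) - γ * ((Set.Ioc (0:ℝ) T).indicator (star' L R) τ * K (t - τ))) := by
      refine integral_congr_ae ?_
      filter_upwards [hRW] with τ hτ
      beta_reduce
      rw [hτ]
      by_cases hmem : τ ∈ Set.Ioc (0:ℝ) T
      · rw [Set.indicator_of_mem hmem, Set.indicator_of_mem hmem]; ring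
      · rw [Set.indicator_of_notMem hmem, Set.indicator_of_notMem hmem]
        have hL0 : L τ = 0 := by
          simp only [Set.mem_Ioc, not_and_or, not_lt, not_le] at hmem
          rcases hmem with h | h
          · exact sL τ h
          · exact sL' τ h
        rw [hL0]; ring
    have split : (∫ τ, (L τ * K (t - τ)
          - γ * ((Set.Ioc (0:ℝ) T).indicator (star' L R) τ * K (t - τ))))
        = (∫ τ, L τ * K (t - τ))
          - γ * ∫ τ, (Set.Ioc (0:ℝ) T).indicator (star' L R) τ * K (t - τ) := by
      rw [integral_sub e1t (e2t.const_mul γ), integral_const_mul]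
    have hLK : (∫ τ, L τ * K (t - τ)) = 1 := by
      rw [← star'_apply, star'_comm]; exact h1 t htm
    have hW2K : (∫ τ, (Set.Ioc (0:ℝ) T).indicator (star' L R) τ * K (t - τ))
        = star' (star' L R) K t := by
      rw [star'_apply]
      refine integral_congr_ae (Eventually.of_forall fun τ => ?_)
      beta_reduce
      by_cases hmem : τ ∈ Set.Ioc (0:ℝ) T
      · rw [Set.indicator_of_mem hmem]
      · rw [Set.indicator_of_notMem hmem]
        simp only [Set.mem_Ioc, not_and_or, not_lt, not_le] at hmem
        rcases hmem with h | h
        · simp [star'_zero sL sR h]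
        · simp [sK (t - τ) (by linarith [htm.2] : t - τ ≤ 0)]
    rw [hVt, step, split, hLK, hW2K]
  -- (iii) : (L⋆R)⋆K = L⋆V a.e.
  have hiii : ∀ᵐ t ∂(volume.restrict (Set.Ioc 0 T)),
      star' (star' L R) K t = star' L (star' K R) t := by
    have a1 := (star'_assoc hLi hKi hRi).filter_mono
      (ae_mono (Measure.restrict_le_self (s := Set.Ioc (0:ℝ) T)))
    have a2 := (star'_assoc hRi hLi hKi).filter_mono
      (ae_mono (Measure.restrict_le_self (s := Set.Ioc (0:ℝ) T)))
    filter_upwards [a1, a2] with t a1t a2t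
    have c1 : star' L R = star' R L := funext fun x => star'_comm L R x
    have c2 : star' L K = star' K L := funext fun x => star'_comm L K x
    calc star' (star' L R) K t = star' (star' R L) K t := by rw [c1]
      _ = star' R (star' L K) t := a2t
      _ = star' (star' L K) R t := star'_comm _ _ _
      _ = star' L (star' K R) t := by rw [c2] at a1t ⊢; exact a1t
  -- V satisfies the equation
  have hVeq : ∀ᵐ t ∂(volume.restrict (Set.Ioc 0 T)),
      star' K R t + γ * star' L (star' K R) t = 1 := by
    filter_upwards [hii, hiii] with t h2 h3
    rw [h2, ← h3]; ring
  -- the difference satisfies the homogeneous equation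
  have hLUsub : ∀ᵐ t ∂(volume : Measure ℝ),
      star' L (fun x => S x - star' K R x) t = star' L S t - star' L (star' K R) t := by
    filter_upwards [ae_integrable_conv hLi hSi, ae_integrable_conv hLi hVi] with t hS1 hV1
    rw [star'_apply, star'_apply, star'_apply, ← integral_sub hS1 hV1]
    congr 1; funext τ; ring
  have hUeq : ∀ᵐ t ∂(volume.restrict (Set.Ioc 0 T)),
      (fun x => S x - star' K R x) t + γ * star' L (fun x => S x - star' K R x) t = 0 := by
    filter_upwards [hSeq, hVeq, hLUsub.filter_mono
      (ae_mono (Measure.restrict_le_self (s := Set.Ioc (0:ℝ) T)))] with t hA hB hC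
    beta_reduce
    rw [hC]; linarith
  have hU0 := uniq L (fun x => S x - star' K R x) hLi (hSi.sub hVi) sL
    (fun x hx => by show S x - star' K R x = 0; rw [sS x hx, hVs x hx, sub_zero]) γ T hUeq
  filter_upwards [hU0] with t ht
  have : S t - star' K R t = 0 := ht
  linarith

lemma key (γ T : ℝ) (k l s r : ℝ → ℝ)
    (hk : IntegrableOn k (Set.Ioc 0 T)) (hl : IntegrableOn l (Set.Ioc 0 T))
    (hs : IntegrableOn s (Set.Ioc 0 T)) (hr : IntegrableOn r (Set.Ioc 0 T))
    (hkl : ∀ t ∈ Set.Ioc (0:ℝ) T, conv k l t = 1)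
    (hseq : ∀ᵐ t ∂(volume.restrict (Set.Ioc 0 T)), s t + γ * conv l s t = 1)
    (hreq : ∀ᵐ t ∂(volume.restrict (Set.Ioc 0 T)), r t + γ * conv l r t = l t) :
    ∀ᵐ t ∂(volume.restrict (Set.Ioc 0 T)), s t = conv k r t := by
  have suppI : ∀ f : ℝ → ℝ, ∀ x ≤ (0:ℝ), (Set.Ioc (0:ℝ) T).indicator f x = 0 := fun f x hx =>
    Set.indicator_of_notMem (fun h => absurd h.1 (not_lt.2 hx)) f
  have suppI' : ∀ f : ℝ → ℝ, ∀ x : ℝ, T < x → (Set.Ioc (0:ℝ) T).indicator f x = 0 :=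
    fun f x hx => Set.indicator_of_notMem (fun h => absurd h.2 (not_le.2 hx)) f
  have hKi : Integrable ((Set.Ioc (0:ℝ) T).indicator k) :=
    (integrable_indicator_iff measurableSet_Ioc).mpr hk
  have hLi : Integrable ((Set.Ioc (0:ℝ) T).indicator l) :=
    (integrable_indicator_iff measurableSet_Ioc).mpr hl
  have hSi : Integrable ((Set.Ioc (0:ℝ) T).indicator s) :=
    (integrable_indicator_iff measurableSet_Ioc).mpr hs
  have hRi : Integrable ((Set.Ioc (0:ℝ) T).indicator r) :=
    (integrable_indicator_iff measurableSet_Ioc).mpr hr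
  have bridge : ∀ (f g : ℝ → ℝ), ∀ t ∈ Set.Ioc (0:ℝ) T,
      conv f g t = star' ((Set.Ioc (0:ℝ) T).indicator f) ((Set.Ioc (0:ℝ) T).indicator g) t :=
    fun f g t ht => by rw [conv_trunc f g T ht, conv_eq_star' (suppI f) (suppI g) ht.1]
  have h1 : ∀ t ∈ Set.Ioc (0:ℝ) T,
      star' ((Set.Ioc (0:ℝ) T).indicator k) ((Set.Ioc (0:ℝ) T).indicator l) t = 1 :=
    fun t ht => by rw [← bridge k l t ht]; exact hkl t ht
  have hSeq' : ∀ᵐ t ∂(volume.restrict (Set.Ioc 0 T)),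
      (Set.Ioc (0:ℝ) T).indicator s t
        + γ * star' ((Set.Ioc (0:ℝ) T).indicator l) ((Set.Ioc (0:ℝ) T).indicator s) t = 1 := by
    filter_upwards [hseq, ae_restrict_mem (μ := (volume : Measure ℝ))
      (measurableSet_Ioc : MeasurableSet (Set.Ioc (0:ℝ) T))] with t h htm
    rw [Set.indicator_of_mem htm s, ← bridge l s t htm]
    exact h
  have hReq' : ∀ᵐ t ∂(volume.restrict (Set.Ioc 0 T)),
      (Set.Ioc (0:ℝ) T).indicator r t
        + γ * star' ((Set.Ioc (0:ℝ) T).indicator l) ((Set.Ioc (0:ℝ) T).indicator r) t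
        = (Set.Ioc (0:ℝ) T).indicator l t := by
    filter_upwards [hreq, ae_restrict_mem (μ := (volume : Measure ℝ))
      (measurableSet_Ioc : MeasurableSet (Set.Ioc (0:ℝ) T))] with t h htm
    rw [Set.indicator_of_mem htm r, Set.indicator_of_mem htm l, ← bridge l r t htm]
    exact h
  have hmain := key' γ T ((Set.Ioc (0:ℝ) T).indicator k) ((Set.Ioc (0:ℝ) T).indicator l)
    ((Set.Ioc (0:ℝ) T).indicator s) ((Set.Ioc (0:ℝ) T).indicator r)
    hKi hLi hSi hRi (suppI k) (suppI l) (suppI s) (suppI r) (suppI' l) (suppI' r)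
    h1 hSeq' hReq'
  filter_upwards [hmain, ae_restrict_mem (μ := (volume : Measure ℝ))
    (measurableSet_Ioc : MeasurableSet (Set.Ioc (0:ℝ) T))] with t h htm
  rw [bridge k r t htm, ← Set.indicator_of_mem htm s]
  exact h

end SkrAux

theorem s_eq_k_conv_r
    (k l : ℝ → ℝ)
    (hk : ∀ T > (0:ℝ), IntegrableOn k (Set.Ioc 0 T))
    (hl : ∀ T > (0:ℝ), IntegrableOn l (Set.Ioc 0 T))
    (hkl : ∀ t > (0:ℝ), conv k l t = 1)
    (γ : ℝ) (s r : ℝ → ℝ)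
    (hs : ∀ T > (0:ℝ), IntegrableOn s (Set.Ioc 0 T))
    (hr : ∀ T > (0:ℝ), IntegrableOn r (Set.Ioc 0 T))
    (hseq : ∀ᵐ t ∂(volume.restrict (Set.Ioi (0:ℝ))), s t + γ * conv l s t = 1)
    (hreq : ∀ᵐ t ∂(volume.restrict (Set.Ioi (0:ℝ))), r t + γ * conv l r t = l t) :
    ∀ᵐ t ∂(volume.restrict (Set.Ioi (0:ℝ))), s t = conv k r t := by
  have hmain : ∀ n : ℕ, ∀ᵐ t ∂(volume.restrict (Set.Ioc (0:ℝ) (n+1))), s t = conv k r t := by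
    intro n
    have hn : (0:ℝ) < n+1 := by positivity
    exact key γ (n+1) k l s r (hk _ hn) (hl _ hn) (hs _ hn) (hr _ hn)
      (fun t ht => hkl t ht.1)
      (ae_restrict_of_ae_restrict_of_subset Set.Ioc_subset_Ioi_self hseq)
      (ae_restrict_of_ae_restrict_of_subset Set.Ioc_subset_Ioi_self hreq)
  have hsub : Set.Ioi (0:ℝ) ⊆ ⋃ n : ℕ, Set.Ioc (0:ℝ) (n+1) := by
    intro x hx
    obtain ⟨n, hn⟩ := exists_nat_ge x
    exact Set.mem_iUnion.mpr ⟨n, hx, by push_cast; linarith⟩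
  exact ae_restrict_of_ae_restrict_of_subset hsub
    ((ae_restrict_iUnion_iff _ _).mpr hmain)
end

section
/- Let $(k,l)$ be locally integrable kernels on $(0,\infty)$ with $k \ast l = 1$, let $\gamma > 0$, and let $r_\gamma$ be the nonnegative locally integrable solution of $r_\gamma + \gamma(l \ast r_\gamma) = l$ on $(0,\infty)$ and $s_\gamma$ the nonnegative solution of $s_\gamma + \gamma(l \ast s_\gamma) = 1$. Then $r_\gamma$ is integrable on $(0,\infty)$ with $\int_0^\infty r_\gamma(\tau)\,d\tau \le 1/\gamma$. -/
open MeasureTheory Real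

/-!
Convolving the equation for `s` with `r` and the equation for `r` with `s`, associativity and
commutativity of the convolution give `∫₀ᵗ r = l ∗ s (t)`, that is `γ ∫₀ᵗ r = 1 - s t ≤ 1` for
almost every `t`. Since `r ≥ 0`, the bound passes to `∫₀^∞ r`.

For `0 < t ≤ T`, `conv F G t` only sees `F` and `G` on `(0, T]` and agrees with the convolution
on `ℝ` of their truncations to `(0, T]`, which are integrable; associativity and the a.e.
integrability of the integrands thus reduce to the `L¹` theory of convolution on `ℝ`.
-/

open Set Filter ContinuousLinearMap
open scoped Convolution

theorem MeasureTheory.Integrable.ae_convolution_mul_assoc {G : Type*} [AddGroup G]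
    [MeasurableSpace G] [MeasurableAdd₂ G] [MeasurableNeg G] {μ : Measure G} [SFinite μ]
    [μ.IsAddRightInvariant] {f g k : G → ℝ} (hf : Integrable f μ) (hg : Integrable g μ)
    (hk : Integrable k μ) :
    ∀ᵐ x ∂μ,
      ((f ⋆[mul ℝ ℝ, μ] g) ⋆[mul ℝ ℝ, μ] k) x = (f ⋆[mul ℝ ℝ, μ] (g ⋆[mul ℝ ℝ, μ] k)) x := by
  filter_upwards [hf.norm.ae_convolution_exists (mul ℝ ℝ)
    (hg.norm.integrable_convolution (mul ℝ ℝ) hk.norm)] with x hx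
  exact convolution_assoc (mul ℝ ℝ) (mul ℝ ℝ) (mul ℝ ℝ) (mul ℝ ℝ) (fun a b c => mul_assoc a b c)
    hf.1 hg.1 hk.1 (hf.ae_convolution_exists _ hg) (hg.norm.ae_convolution_exists _ hk.norm) hx

theorem ae_restrict_Ioi_of_forall_Ioc {p : ℝ → Prop} {a : ℝ}
    (h : ∀ T > a, ∀ᵐ t ∂(volume.restrict (Ioc a T)), p t) :
    ∀ᵐ t ∂(volume.restrict (Ioi a)), p t := by
  have hcover : ⋃ n : ℕ, Ioc a (a + n + 1) = Ioi a :=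
    iUnion_Ioc_eq_Ioi_self_iff.2 fun x _ =>
      (exists_nat_ge (x - a)).imp fun n hn => by linarith
  rw [← hcover, ae_restrict_iUnion_iff]
  exact fun n => h _ (by linarith [n.cast_nonneg (α := ℝ)])

theorem integrableOn_Ioi_of_setIntegral_Ioc_le {f : ℝ → ℝ} {a C : ℝ}
    (hf : ∀ T > a, IntegrableOn f (Ioc a T))
    (hf_nonneg : ∀ᵐ t ∂(volume.restrict (Ioi a)), 0 ≤ f t)
    (hbound : ∀ᵐ t ∂(volume.restrict (Ioi a)), ∫ τ in Ioc a t, f τ ≤ C) :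
    IntegrableOn f (Ioi a) ∧ ∫ τ in Ioi a, f τ ≤ C := by
  have hbound_all : ∀ T > a, ∫ τ in Ioc a T, f τ ≤ C := by
    intro T hT
    have : (ae (volume.restrict (Ioi T))).NeBot := by
      rw [ae_neBot]; simp [Measure.restrict_eq_zero]
    obtain ⟨t, ht, hTt⟩ := ((ae_restrict_of_ae_restrict_of_subset (Ioi_subset_Ioi hT.le)
      hbound).and (ae_restrict_mem measurableSet_Ioi)).exists
    calc ∫ τ in Ioc a T, f τ ≤ ∫ τ in Ioc a t, f τ :=
          setIntegral_mono_set (hf t (hT.trans hTt))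
            (ae_restrict_of_ae_restrict_of_subset Ioc_subset_Ioi_self hf_nonneg)
            (Ioc_subset_Ioc_right hTt.le).eventuallyLE
      _ ≤ C := ht
  have hnorm : ∀ T > a, ∫ τ in a..T, ‖f τ‖ = ∫ τ in Ioc a T, f τ := fun T hT => by
    rw [intervalIntegral.integral_of_le hT.le]
    refine integral_congr_ae ?_
    filter_upwards [ae_restrict_of_ae_restrict_of_subset Ioc_subset_Ioi_self hf_nonneg]
      with τ hτ using Real.norm_of_nonneg hτ
  have hf_Ioc : ∀ T, IntegrableOn f (Ioc a T) := fun T => by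
    rcases lt_or_ge a T with hT | hT
    · exact hf T hT
    · simp [Ioc_eq_empty_of_le hT]
  have hint : IntegrableOn f (Ioi a) :=
    integrableOn_Ioi_of_intervalIntegral_norm_bounded C a (b := id) hf_Ioc tendsto_id
      ((eventually_gt_atTop a).mono fun T hT => (hnorm T hT).trans_le (hbound_all T hT))
  refine ⟨hint, le_of_tendsto (intervalIntegral_tendsto_integral_Ioi a hint tendsto_id) ?_⟩
  filter_upwards [eventually_gt_atTop a] with T hT
  rw [id, intervalIntegral.integral_of_le hT.le]
  exact hbound_all T hT

theorem conv_eq_setIntegral (f g : ℝ → ℝ) {t : ℝ} (ht : 0 ≤ t) :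
    conv f g t = ∫ τ in Ioc 0 t, f (t - τ) * g τ :=
  intervalIntegral.integral_of_le ht

theorem conv_comm (f g : ℝ → ℝ) (t : ℝ) : conv f g t = conv g f t := by
  simpa [conv, mul_comm] using
    (intervalIntegral.integral_comp_sub_left (fun τ => f τ * g (t - τ)) t (a := 0) (b := t))

theorem conv_const_mul (c : ℝ) (f g : ℝ → ℝ) (t : ℝ) :
    conv (fun u => c * f u) g t = c * conv f g t := by
  simp only [conv, ← intervalIntegral.integral_const_mul, mul_assoc]

theorem conv_one_left (g : ℝ → ℝ) {t : ℝ} (ht : 0 ≤ t) :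
    conv (fun _ => 1) g t = ∫ τ in Ioc 0 t, g τ := by
  simp [conv_eq_setIntegral _ _ ht]

theorem conv_sub_left {f g h : ℝ → ℝ} {t : ℝ} (ht : 0 ≤ t)
    (hf : IntegrableOn (fun τ => f (t - τ) * h τ) (Ioc 0 t))
    (hg : IntegrableOn (fun τ => g (t - τ) * h τ) (Ioc 0 t)) :
    conv (fun u => f u - g u) h t = conv f h t - conv g h t := by
  simp only [conv_eq_setIntegral _ _ ht, sub_mul]
  exact integral_sub hf hg

theorem conv_congr_left {f f' : ℝ → ℝ} (g : ℝ → ℝ)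
    (h : ∀ᵐ u ∂(volume.restrict (Ioi 0)), f u = f' u) {t : ℝ} (ht : 0 < t) :
    conv f g t = conv f' g t := by
  rw [conv_eq_setIntegral _ _ ht.le, conv_eq_setIntegral _ _ ht.le, integral_Ioc_eq_integral_Ioo,
    integral_Ioc_eq_integral_Ioo]
  have h_shift : ∀ᵐ τ, t - τ ∈ Ioi 0 → f (t - τ) = f' (t - τ) :=
    (Measure.measurePreserving_sub_left volume t).quasiMeasurePreserving.ae
      (ae_imp_of_ae_restrict h)
  refine setIntegral_congr_ae measurableSet_Ioo ?_
  filter_upwards [h_shift] with τ hτ hτt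
  rw [hτ (sub_pos.2 hτt.2)]

section Convolution

variable {F G H : ℝ → ℝ} {T t : ℝ}

theorem indicator_Ioc_mul_indicator_Ioc_sub (htT : t ≤ T) (τ : ℝ) :
    (Ioc 0 T).indicator G τ * (Ioc 0 T).indicator F (t - τ)
      = (Ioo 0 t).indicator (fun τ => F (t - τ) * G τ) τ := by
  by_cases hτ : τ ∈ Ioo 0 t
  · rw [indicator_of_mem hτ, indicator_of_mem (show τ ∈ Ioc 0 T from ⟨hτ.1, hτ.2.le.trans htT⟩),
      indicator_of_mem (show t - τ ∈ Ioc 0 T from ⟨sub_pos.2 hτ.2, by linarith [hτ.1]⟩), mul_comm]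
  · rw [indicator_of_notMem hτ]
    rcases not_and_or.1 hτ with hτ | hτ
    · rw [indicator_of_notMem (show τ ∉ Ioc 0 T from fun h => hτ h.1), zero_mul]
    · rw [indicator_of_notMem (show t - τ ∉ Ioc 0 T from fun h => hτ (sub_pos.1 h.1)), mul_zero]

theorem conv_eq_convolution_indicator (ht : 0 < t) (htT : t ≤ T) :
    conv F G t = ((Ioc 0 T).indicator G ⋆[mul ℝ ℝ] (Ioc 0 T).indicator F) t := by
  simp only [convolution_mul, indicator_Ioc_mul_indicator_Ioc_sub htT,
    integral_indicator measurableSet_Ioo, conv_eq_setIntegral _ _ ht.le,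
    integral_Ioc_eq_integral_Ioo]

theorem convolution_indicator_Ioc_of_nonpos (ht : t ≤ 0) :
    ((Ioc 0 T).indicator G ⋆[mul ℝ ℝ] (Ioc 0 T).indicator F) t = 0 := by
  rw [convolution_mul]
  refine integral_eq_zero_of_ae (Eventually.of_forall fun τ => ?_)
  dsimp only [Pi.zero_apply]
  by_cases hτ : 0 < τ
  · rw [indicator_of_notMem (fun h => by linarith [h.1] : t - τ ∉ Ioc 0 T), mul_zero]
  · rw [indicator_of_notMem (show τ ∉ Ioc 0 T from fun h => hτ h.1), zero_mul]

theorem indicator_Ioc_conv :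
    (Ioc 0 T).indicator (conv F G)
      = (Iic T).indicator ((Ioc 0 T).indicator G ⋆[mul ℝ ℝ] (Ioc 0 T).indicator F) := by
  ext u
  rcases le_or_gt u 0 with hu | hu
  · rw [indicator_of_notMem (show u ∉ Ioc 0 T from fun h => by linarith [h.1]),
      indicator_apply, convolution_indicator_Ioc_of_nonpos hu, ite_self]
  rcases le_or_gt u T with huT | huT
  · rw [indicator_of_mem (show u ∈ Ioc 0 T from ⟨hu, huT⟩), indicator_of_mem (mem_Iic.2 huT),
      conv_eq_convolution_indicator hu huT]
  · rw [indicator_of_notMem (show u ∉ Ioc 0 T from fun h => by linarith [h.2]),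
      indicator_of_notMem (notMem_Iic.2 huT)]

theorem indicator_Ioc_mul_indicator_Iic_sub (A : ℝ → ℝ) (htT : t ≤ T) (τ : ℝ) :
    (Ioc 0 T).indicator F τ * (Iic T).indicator A (t - τ)
      = (Ioc 0 T).indicator F τ * A (t - τ) := by
  by_cases hτ : 0 < τ
  · rw [indicator_of_mem (mem_Iic.2 (by linarith))]
  · rw [indicator_of_notMem (show τ ∉ Ioc 0 T from fun h => hτ h.1), zero_mul, zero_mul]

theorem convolution_indicator_Iic_right (A : ℝ → ℝ) (htT : t ≤ T) :
    ((Ioc 0 T).indicator F ⋆[mul ℝ ℝ] (Iic T).indicator A) t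
      = ((Ioc 0 T).indicator F ⋆[mul ℝ ℝ] A) t := by
  simp only [convolution_mul, indicator_Ioc_mul_indicator_Iic_sub A htT]

theorem convolution_indicator_Iic_left (A : ℝ → ℝ) (htT : t ≤ T) :
    ((Iic T).indicator A ⋆[mul ℝ ℝ] (Ioc 0 T).indicator F) t
      = (A ⋆[mul ℝ ℝ] (Ioc 0 T).indicator F) t := by
  simp only [convolution_mul_swap, mul_comm _ ((Ioc 0 T).indicator F _),
    indicator_Ioc_mul_indicator_Iic_sub A htT]

theorem ae_integrableOn_conv_integrand (hF : ∀ T > 0, IntegrableOn F (Ioc 0 T))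
    (hG : ∀ T > 0, IntegrableOn G (Ioc 0 T)) :
    ∀ᵐ t ∂(volume.restrict (Ioi 0)), IntegrableOn (fun τ => F (t - τ) * G τ) (Ioc 0 t) := by
  refine ae_restrict_Ioi_of_forall_Ioc fun T hT => ?_
  have hexists := ((integrable_indicator_iff measurableSet_Ioc).2 (hG T hT)).ae_convolution_exists
    (mul ℝ ℝ) ((integrable_indicator_iff measurableSet_Ioc).2 (hF T hT))
  filter_upwards [ae_restrict_of_ae hexists, ae_restrict_mem measurableSet_Ioc] with t ht htT
  simp only [ConvolutionExistsAt, mul_apply', indicator_Ioc_mul_indicator_Ioc_sub htT.2,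
    integrable_indicator_iff measurableSet_Ioo] at ht
  exact (integrableOn_Ioc_iff_integrableOn_Ioo).2 ht

theorem ae_conv_conv_assoc (hF : ∀ T > 0, IntegrableOn F (Ioc 0 T))
    (hG : ∀ T > 0, IntegrableOn G (Ioc 0 T)) (hH : ∀ T > 0, IntegrableOn H (Ioc 0 T)) :
    ∀ᵐ t ∂(volume.restrict (Ioi 0)), conv (conv F G) H t = conv F (conv G H) t := by
  refine ae_restrict_Ioi_of_forall_Ioc fun T hT => ?_
  have hassoc := Integrable.ae_convolution_mul_assoc
    ((integrable_indicator_iff measurableSet_Ioc).2 (hH T hT))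
    ((integrable_indicator_iff measurableSet_Ioc).2 (hG T hT))
    ((integrable_indicator_iff measurableSet_Ioc).2 (hF T hT))
  filter_upwards [ae_restrict_of_ae hassoc, ae_restrict_mem measurableSet_Ioc] with t ht htT
  rw [conv_eq_convolution_indicator htT.1 htT.2, conv_eq_convolution_indicator htT.1 htT.2,
    indicator_Ioc_conv, indicator_Ioc_conv, convolution_indicator_Iic_right _ htT.2,
    convolution_indicator_Iic_left _ htT.2, ht]

theorem ae_conv_conv_right_comm (hF : ∀ T > 0, IntegrableOn F (Ioc 0 T))
    (hG : ∀ T > 0, IntegrableOn G (Ioc 0 T)) (hH : ∀ T > 0, IntegrableOn H (Ioc 0 T)) :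
    ∀ᵐ t ∂(volume.restrict (Ioi 0)), conv (conv F G) H t = conv (conv F H) G t := by
  filter_upwards [ae_conv_conv_assoc hF hG hH, ae_conv_conv_assoc hF hH hG] with t h₁ h₂
  rw [h₁, h₂, funext (conv_comm G H)]

end Convolution

theorem ae_mul_setIntegral_Ioc_eq_one_sub {l s r : ℝ → ℝ} {γ : ℝ}
    (hl : ∀ T > 0, IntegrableOn l (Ioc 0 T)) (hs : ∀ T > 0, IntegrableOn s (Ioc 0 T))
    (hr : ∀ T > 0, IntegrableOn r (Ioc 0 T))
    (hseq : ∀ᵐ t ∂(volume.restrict (Ioi 0)), s t + γ * conv l s t = 1)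
    (hreq : ∀ᵐ t ∂(volume.restrict (Ioi 0)), r t + γ * conv l r t = l t) :
    ∀ᵐ t ∂(volume.restrict (Ioi 0)), γ * ∫ τ in Ioc 0 t, r τ = 1 - s t := by
  have hseq' : ∀ᵐ u ∂(volume.restrict (Ioi 0)), γ * conv l s u = 1 - s u := by
    filter_upwards [hseq] with u hu using by linarith
  have hreq' : ∀ᵐ u ∂(volume.restrict (Ioi 0)), γ * conv l r u = l u - r u := by
    filter_upwards [hreq] with u hu using by linarith
  filter_upwards [ae_conv_conv_right_comm hl hs hr, ae_integrableOn_conv_integrand hs hr,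
    ae_integrableOn_conv_integrand hl hs, ae_integrableOn_conv_integrand hr hs, hseq',
    ae_restrict_mem measurableSet_Ioi] with t hcomm hsr hls hrs hst ht
  have h1 : γ * conv (conv l s) r t = (∫ τ in Ioc 0 t, r τ) - conv s r t := by
    rw [← conv_const_mul, conv_congr_left r hseq' ht,
      conv_sub_left ht.le (by simpa using hr t ht) hsr, conv_one_left r ht.le]
  have h2 : γ * conv (conv l r) s t = conv l s t - conv r s t := by
    rw [← conv_const_mul, conv_congr_left s hreq' ht, conv_sub_left ht.le hls hrs]
  rw [← hst]
  linear_combination γ * (h2 - h1 + γ * hcomm + conv_comm s r t)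

theorem r_gamma_integrable_general
    (l : ℝ → ℝ)
    (hl : ∀ T > (0:ℝ), IntegrableOn l (Set.Ioc 0 T))
    (γ : ℝ) (hγ : 0 < γ) (s r : ℝ → ℝ)
    (hs : ∀ T > (0:ℝ), IntegrableOn s (Set.Ioc 0 T))
    (hr : ∀ T > (0:ℝ), IntegrableOn r (Set.Ioc 0 T))
    (hsnn : ∀ᵐ t ∂(volume.restrict (Set.Ioi (0:ℝ))), 0 ≤ s t)
    (hrnn : ∀ᵐ t ∂(volume.restrict (Set.Ioi (0:ℝ))), 0 ≤ r t)
    (hseq : ∀ᵐ t ∂(volume.restrict (Set.Ioi (0:ℝ))), s t + γ * conv l s t = 1)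
    (hreq : ∀ᵐ t ∂(volume.restrict (Set.Ioi (0:ℝ))), r t + γ * conv l r t = l t) :
    IntegrableOn r (Set.Ioi (0:ℝ)) ∧ (∫ τ in Set.Ioi (0:ℝ), r τ) ≤ 1 / γ := by
  refine integrableOn_Ioi_of_setIntegral_Ioc_le hr hrnn ?_
  filter_upwards [ae_mul_setIntegral_Ioc_eq_one_sub hl hs hr hseq hreq, hsnn] with t ht hst
  rw [le_div_iff₀ hγ]
  linarith

theorem r_gamma_integrable
    (k l : ℝ → ℝ)
    (hk : ∀ T > (0:ℝ), IntegrableOn k (Set.Ioc 0 T))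
    (hl : ∀ T > (0:ℝ), IntegrableOn l (Set.Ioc 0 T))
    (hkl : ∀ t > (0:ℝ), conv k l t = 1)
    (γ : ℝ) (hγ : 0 < γ) (s r : ℝ → ℝ)
    (hs : ∀ T > (0:ℝ), IntegrableOn s (Set.Ioc 0 T))
    (hr : ∀ T > (0:ℝ), IntegrableOn r (Set.Ioc 0 T))
    (hsnn : ∀ᵐ t ∂(volume.restrict (Set.Ioi (0:ℝ))), 0 ≤ s t)
    (hrnn : ∀ᵐ t ∂(volume.restrict (Set.Ioi (0:ℝ))), 0 ≤ r t)
    (hseq : ∀ᵐ t ∂(volume.restrict (Set.Ioi (0:ℝ))), s t + γ * conv l s t = 1)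
    (hreq : ∀ᵐ t ∂(volume.restrict (Set.Ioi (0:ℝ))), r t + γ * conv l r t = l t) :
    IntegrableOn r (Set.Ioi (0:ℝ)) ∧ (∫ τ in Set.Ioi (0:ℝ), r τ) ≤ 1 / γ :=
  r_gamma_integrable_general l hl γ hγ s r hs hr hsnn hrnn hseq hreq
end

section
/- (Abstract Gronwall for convolution with nonnegative kernel.) Let $T > 0$, $l \in L_1((0,T))$ nonnegative, and $w \in L_\infty((0,T))$ nonnegative with $w(t) \le C\,(l \ast w)(t)$ for almost all $t \in (0,T)$, where $C \ge 0$. Then $w = 0$ almost everywhere on $(0,T)$. -/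
open MeasureTheory Real Set Filter

/-- Choosing a small initial interval on which the kernel has small integral. -/
lemma gronwall_small_tail (T : ℝ) (hT : 0 < T) (l : ℝ → ℝ)
    (hl : IntegrableOn l (Set.Ioo 0 T)) (ε : ℝ) (hε : 0 < ε) :
    ∃ δ : ℝ, 0 < δ ∧ δ ≤ T ∧ (∫ u in Set.Ioo (0:ℝ) δ, |l u|) < ε := by
  have habs : IntegrableOn (fun u => |l u|) (Set.Ioo 0 T) := hl.abs
  have hsub : ∀ n : ℕ, Set.Ioo (0:ℝ) (T/(n+1)) ⊆ Set.Ioo 0 T := by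
    intro n u hu
    refine ⟨hu.1, lt_of_lt_of_le hu.2 ?_⟩
    apply div_le_self hT.le
    have : (0:ℝ) ≤ (n:ℝ) := Nat.cast_nonneg n
    linarith
  have key : Tendsto (fun n : ℕ => ∫ u in Set.Ioo (0:ℝ) (T/(n+1)), |l u|) atTop (nhds 0) := by
    have heq : ∀ n : ℕ, (∫ u in Set.Ioo (0:ℝ) (T/(n+1)), |l u|)
        = ∫ u in Set.Ioo (0:ℝ) T, (Set.Ioo (0:ℝ) (T/(n+1))).indicator (fun u => |l u|) u := by
      intro n
      rw [setIntegral_indicator measurableSet_Ioo, Set.inter_eq_right.mpr (hsub n)]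
    simp only [heq]
    have key' : Tendsto
        (fun n : ℕ => ∫ u in Set.Ioo (0:ℝ) T, (Set.Ioo (0:ℝ) (T/(n+1))).indicator (fun u => |l u|) u)
        atTop (nhds (∫ u in Set.Ioo (0:ℝ) T, (0:ℝ))) := by
      apply tendsto_integral_of_dominated_convergence (fun u => |l u|)
      · intro n
        exact (habs.1.indicator measurableSet_Ioo)
      · exact habs
      · intro n
        filter_upwards with u
        by_cases hu : u ∈ Set.Ioo (0:ℝ) (T/(n+1))
        · rw [Set.indicator_of_mem hu]; simp
        · rw [Set.indicator_of_notMem hu]; simp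
      · filter_upwards [ae_restrict_mem measurableSet_Ioo] with u hu
        have hu0 : 0 < u := hu.1
        obtain ⟨N, hN⟩ := exists_nat_ge (T / u)
        apply Tendsto.congr' (f₁ := fun _ => (0:ℝ)) _ tendsto_const_nhds
        filter_upwards [eventually_ge_atTop N] with n hn
        have hle : T / (n+1) ≤ u := by
          rw [div_le_iff₀ (by positivity)]
          have h1 : T / u ≤ (n:ℝ) + 1 := by
            refine le_trans hN ?_
            have : (N:ℝ) ≤ (n:ℝ) := by exact_mod_cast hn
            linarith
          calc T = (T / u) * u := by field_simp
            _ ≤ ((n:ℝ)+1) * u := by apply mul_le_mul_of_nonneg_right h1 hu0.le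
            _ = u * ((n:ℝ)+1) := mul_comm _ _
        symm
        apply Set.indicator_of_notMem
        intro hmem
        exact absurd hmem.2 (not_lt.mpr hle)
    simpa using key'
  have := key.eventually (eventually_lt_nhds hε) |>.exists
  obtain ⟨n, hn⟩ := this
  refine ⟨T/(n+1), by positivity, ?_, hn⟩
  apply div_le_self hT.le
  have : (0:ℝ) ≤ (n:ℝ) := Nat.cast_nonneg n
  linarith

/-- Abstract Gronwall lemma for convolution with a nonnegative kernel. -/
theorem gronwall_convolution
    (T : ℝ) (hT : 0 < T) (l : ℝ → ℝ)
    (hl : IntegrableOn l (Set.Ioo 0 T))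
    (hlnn : ∀ᵐ t ∂(volume.restrict (Set.Ioo (0:ℝ) T)), 0 ≤ l t)
    (w : ℝ → ℝ) (hw : Measurable w)
    (hwbd : ∃ M : ℝ, ∀ᵐ t ∂(volume.restrict (Set.Ioo (0:ℝ) T)), |w t| ≤ M)
    (hwnn : ∀ᵐ t ∂(volume.restrict (Set.Ioo (0:ℝ) T)), 0 ≤ w t)
    (C : ℝ) (hC : 0 ≤ C)
    (hineq : ∀ᵐ t ∂(volume.restrict (Set.Ioo (0:ℝ) T)), w t ≤ C * conv l w t) :
    ∀ᵐ t ∂(volume.restrict (Set.Ioo (0:ℝ) T)), w t = 0 := by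
  classical
  obtain ⟨M₀, hM₀⟩ := hwbd
  set M : ℝ := max M₀ 0 with hMdef
  have hMnn : 0 ≤ M := le_max_right _ _
  have hwabs : ∀ᵐ t ∂volume, t ∈ Set.Ioo 0 T → |w t| ≤ M := by
    have := (ae_restrict_iff' measurableSet_Ioo).1 hM₀
    filter_upwards [this] with t ht htm
    exact le_trans (ht htm) (le_max_left _ _)
  have hwM : ∀ᵐ t ∂volume, t ∈ Set.Ioo 0 T → w t ≤ M := by
    filter_upwards [hwabs] with t ht htm
    exact le_trans (le_abs_self _) (ht htm)
  have hwnn' : ∀ᵐ t ∂volume, t ∈ Set.Ioo 0 T → 0 ≤ w t :=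
    (ae_restrict_iff' measurableSet_Ioo).1 hwnn
  have hlnn' : ∀ᵐ t ∂volume, t ∈ Set.Ioo 0 T → 0 ≤ l t :=
    (ae_restrict_iff' measurableSet_Ioo).1 hlnn
  have hineq' : ∀ᵐ t ∂volume, t ∈ Set.Ioo 0 T → w t ≤ C * conv l w t :=
    (ae_restrict_iff' measurableSet_Ioo).1 hineq
  set ε : ℝ := 1/(2*(C+1)) with hεdef
  have hε : 0 < ε := by positivity
  have hCε : C * ε ≤ 1/2 := by
    rw [hεdef]
    rw [mul_one_div, div_le_div_iff₀ (by positivity) (by norm_num)]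
    ring_nf
    nlinarith
  obtain ⟨δ, hδ0, hδT, hδε⟩ := gronwall_small_tail T hT l hl ε hε
  -- key step : if w = 0 a.e. on (0,s) then also on (0, s+δ)
  have step : ∀ s : ℝ, 0 ≤ s →
      (∀ᵐ t ∂volume, t ∈ Set.Ioo 0 T → t < s → w t = 0) →
      (∀ᵐ t ∂volume, t ∈ Set.Ioo 0 T → t < s + δ → w t = 0) := by
    intro s hs hP
    have hts : ∀ᵐ t : ℝ ∂volume, t ≠ s := by
      rw [ae_iff]
      have : {t : ℝ | ¬ t ≠ s} = {s} := by ext x; simp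
      rw [this]
      exact measure_singleton s
    -- contraction step
    have inner : ∀ K : ℝ, 0 ≤ K →
        (∀ᵐ t ∂volume, t ∈ Set.Ioo 0 T → t < s + δ → w t ≤ K) →
        (∀ᵐ t ∂volume, t ∈ Set.Ioo 0 T → t < s + δ → w t ≤ K / 2) := by
      intro K hK hQ
      filter_upwards [hineq', hP, hts] with t hineqt hPt htne htIoo htlt
      rcases lt_trichotomy t s with hcase | hcase | hcase
      · rw [hPt htIoo hcase]; positivity
      · exact absurd hcase htne
      · obtain ⟨ht0, htT⟩ := htIoo
        -- integrability facts
        have hlint : IntervalIntegrable l volume 0 t := by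
          rw [intervalIntegrable_iff_integrableOn_Ioc_of_le ht0.le]
          exact hl.mono_set (fun τ hτ => ⟨hτ.1, lt_of_le_of_lt hτ.2 htT⟩)
        have hlt' : IntervalIntegrable (fun τ => l (t - τ)) volume 0 t := by
          simpa using (hlint.comp_sub_left t).symm
        have hlI : IntegrableOn (fun τ => l (t - τ)) (Set.Ioo 0 t) :=
          ((intervalIntegrable_iff_integrableOn_Ioc_of_le ht0.le).1 hlt').mono_set
            Set.Ioo_subset_Ioc_self
        have hwsm : AEStronglyMeasurable w (volume.restrict (Set.Ioo 0 t)) :=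
          hw.aestronglyMeasurable
        have hwbd' : ∀ᵐ τ ∂volume.restrict (Set.Ioo 0 t), ‖w τ‖ ≤ M := by
          filter_upwards [ae_restrict_of_ae hwabs, ae_restrict_mem measurableSet_Ioo]
            with τ h1 h2
          rw [Real.norm_eq_abs]
          exact h1 ⟨h2.1, h2.2.trans htT⟩
        have hint : IntegrableOn (fun τ => l (t - τ) * w τ) (Set.Ioo 0 t) := by
          have h1 : Integrable (fun τ => w τ * l (t - τ)) (volume.restrict (Set.Ioo 0 t)) :=
            hlI.bdd_mul hwsm hwbd'
          exact h1.congr (Eventually.of_forall fun τ => mul_comm _ _)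
        have hconv : conv l w t = ∫ τ in Set.Ioo 0 t, l (t - τ) * w τ := by
          rw [conv, intervalIntegral.integral_of_le ht0.le, integral_Ioc_eq_integral_Ioo]
        -- nonnegativity of l(t-·) a.e.
        have hlnt : ∀ᵐ τ : ℝ ∂volume, (t - τ) ∈ Set.Ioo 0 T → 0 ≤ l (t - τ) :=
          (quasiMeasurePreserving_sub_left_of_right_invariant volume t).ae hlnn'
        -- pointwise bound under the integral
        have hptw : ∀ᵐ τ ∂volume.restrict (Set.Ioo 0 t),
            l (t - τ) * w τ ≤ (Set.Ioi s).indicator (fun τ => K * l (t - τ)) τ := by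
          filter_upwards [ae_restrict_of_ae hlnt, ae_restrict_of_ae hP, ae_restrict_of_ae hQ,
            ae_restrict_of_ae hwnn', ae_restrict_of_ae hts,
            ae_restrict_mem measurableSet_Ioo] with τ h1 h2 h3 h4 h5 hτ
          have hτT : τ ∈ Set.Ioo 0 T := ⟨hτ.1, hτ.2.trans htT⟩
          have hlpos : 0 ≤ l (t - τ) := h1 ⟨by linarith [hτ.2], by linarith [hτ.1]⟩
          by_cases hcs : s < τ
          · rw [Set.indicator_of_mem (Set.mem_Ioi.mpr hcs)]
            have hwK : w τ ≤ K := h3 hτT (by linarith [hτ.2])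
            calc l (t - τ) * w τ ≤ l (t - τ) * K := mul_le_mul_of_nonneg_left hwK hlpos
              _ = K * l (t - τ) := mul_comm _ _
          · rw [Set.indicator_of_notMem (by simpa using hcs)]
            have hτs : τ < s := lt_of_le_of_ne (not_lt.1 hcs) h5
            rw [h2 hτT hτs, mul_zero]
        have hind : IntegrableOn ((Set.Ioi s).indicator (fun τ => K * l (t - τ)))
            (Set.Ioo 0 t) :=
          (hlI.const_mul K).indicator measurableSet_Ioi
        have hmono := integral_mono_ae hint hind hptw
        have hIoos : Set.Ioo 0 t ∩ Set.Ioi s = Set.Ioo s t := by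
          rw [Set.Ioo_inter_Ioi, max_eq_right hs]
        have hRHS : (∫ τ in Set.Ioo 0 t, (Set.Ioi s).indicator (fun τ => K * l (t - τ)) τ)
            = K * ∫ τ in Set.Ioo s t, l (t - τ) := by
          rw [setIntegral_indicator measurableSet_Ioi, hIoos, integral_const_mul]
        have hsub2 : (∫ τ in Set.Ioo s t, l (t - τ)) = ∫ u in Set.Ioo 0 (t - s), l u := by
          rw [← integral_Ioc_eq_integral_Ioo, ← intervalIntegral.integral_of_le hcase.le,
            intervalIntegral.integral_comp_sub_left l t, sub_self,
            intervalIntegral.integral_of_le (by linarith), integral_Ioc_eq_integral_Ioo]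
        have htsT : Set.Ioo (0:ℝ) (t - s) ⊆ Set.Ioo 0 T := by
          intro u hu; exact ⟨hu.1, by linarith [hu.2]⟩
        have hsmall : (∫ u in Set.Ioo (0:ℝ) (t - s), l u) ≤ ε := by
          have h1 : (∫ u in Set.Ioo (0:ℝ) (t - s), l u)
              ≤ ∫ u in Set.Ioo (0:ℝ) (t - s), |l u| :=
            integral_mono_ae (hl.mono_set htsT) (MeasureTheory.IntegrableOn.mono_set hl.abs htsT)
              (Eventually.of_forall fun u => le_abs_self _)
          have h2 : (∫ u in Set.Ioo (0:ℝ) (t - s), |l u|) ≤ ∫ u in Set.Ioo (0:ℝ) δ, |l u| := by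
            apply setIntegral_mono_set
            · exact MeasureTheory.IntegrableOn.mono_set hl.abs
                (fun u hu => ⟨hu.1, lt_of_lt_of_le hu.2 hδT⟩)
            · filter_upwards with u; exact abs_nonneg _
            · filter_upwards with u hu
              exact ⟨hu.1, by linarith [hu.2]⟩
          linarith
        have hchain : w t ≤ C * (K * ε) := by
          calc w t ≤ C * conv l w t := hineqt ⟨ht0, htT⟩
            _ ≤ C * (K * ε) := by
              apply mul_le_mul_of_nonneg_left _ hC
              rw [hconv]
              calc (∫ τ in Set.Ioo 0 t, l (t - τ) * w τ)
                  ≤ ∫ τ in Set.Ioo 0 t, (Set.Ioi s).indicator (fun τ => K * l (t - τ)) τ :=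
                    hmono
                _ = K * ∫ τ in Set.Ioo s t, l (t - τ) := hRHS
                _ = K * ∫ u in Set.Ioo (0:ℝ) (t - s), l u := by rw [hsub2]
                _ ≤ K * ε := mul_le_mul_of_nonneg_left hsmall hK
        calc w t ≤ C * (K * ε) := hchain
          _ = K * (C * ε) := by ring
          _ ≤ K * (1/2) := mul_le_mul_of_nonneg_left hCε hK
          _ = K / 2 := by ring
    -- iterate the contraction
    have hQn : ∀ n : ℕ, ∀ᵐ t ∂volume, t ∈ Set.Ioo 0 T → t < s + δ → w t ≤ M / 2^n := by
      intro n
      induction n with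
      | zero =>
        filter_upwards [hwM] with t h h1 _
        simpa using h h1
      | succ n ih =>
        have h := inner (M / 2^n) (by positivity) ih
        filter_upwards [h] with t ht h1 h2
        have := ht h1 h2
        calc w t ≤ M / 2^n / 2 := this
          _ = M / 2^(n+1) := by rw [pow_succ]; ring
    have hall : ∀ᵐ t ∂volume, ∀ n : ℕ, t ∈ Set.Ioo 0 T → t < s + δ → w t ≤ M / 2^n :=
      ae_all_iff.2 hQn
    filter_upwards [hall, hwnn'] with t h1 h2 h3 h4
    have htend : Tendsto (fun n : ℕ => M / 2^n) atTop (nhds 0) := by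
      simp_rw [div_eq_mul_inv, ← inv_pow]
      have := tendsto_pow_atTop_nhds_zero_of_lt_one (by norm_num : (0:ℝ) ≤ 2⁻¹)
        (by norm_num : (2:ℝ)⁻¹ < 1)
      simpa using this.const_mul M
    have hle : w t ≤ 0 := ge_of_tendsto' htend (fun n => h1 n h3 h4)
    exact le_antisymm hle (h2 h3)
  -- outer induction
  have houter : ∀ n : ℕ, ∀ᵐ t ∂volume, t ∈ Set.Ioo 0 T → t < (n:ℝ) * δ → w t = 0 := by
    intro n
    induction n with
    | zero =>
      filter_upwards with t ht h
      simp at h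
      linarith [ht.1]
    | succ n ih =>
      have h := step ((n:ℝ) * δ) (by positivity) ih
      filter_upwards [h] with t ht h1 h2
      apply ht h1
      push_cast at h2
      linarith
  obtain ⟨n, hn⟩ := exists_nat_ge (T / δ)
  have hTn : T ≤ (n:ℝ) * δ := by
    rw [div_le_iff₀ hδ0] at hn
    linarith
  rw [ae_restrict_iff' measurableSet_Ioo]
  filter_upwards [houter n] with t h ht
  exact h ht (lt_of_lt_of_le ht.2 hTn)
end

section
/- (Time-shift property of the nonlocal derivative for nonincreasing kernels.) Let $T > 0$, $k \in H^1_1([0,T])$ nonnegative and nonincreasing, $\delta_1 \in (0,T)$, $W_0 \in \mathbb{R}$, and $W \in L_\infty([0,T])$ with $W(t) \ge W_0$ for a.a. $t \in (0,\delta_1)$. Define $\tilde W(s) = W(s + \delta_1)$ for $s \in (0, T - \delta_1)$. Then for almost all $s \in (0, T-\delta_1)$: $\frac{d}{ds}\big(k \ast [\tilde W - W_0]\big)(s) \ge \frac{d}{dt}\big(k \ast [W - W_0]\big)(s + \delta_1)$. -/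
/-!
Splitting the convolution integral at `δ₁` gives
`conv k (W - W₀) (s + δ₁) = H s + conv k (W (· + δ₁) - W₀) s` with history term
`H s = ∫₀^δ₁ k (s + δ₁ - τ) (W τ - W₀) dτ`, which is nonincreasing in `s` since `k` is and
`W ≥ W₀` on `(0, δ₁)`. Convolving a bounded datum with a bounded monotone kernel gives a Lipschitz
function, and `H` is monotone, so both are differentiable almost everywhere; there the derivative
of `H`, the difference of the two derivatives in question, is nonpositive.
-/

open MeasureTheory Real

open Set Filter Topology

lemma AntitoneOn.abs_le_max_abs_abs {f : ℝ → ℝ} {a b x : ℝ} (hf : AntitoneOn f (Icc a b))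
    (hx : x ∈ Icc a b) : |f x| ≤ max |f b| |f a| :=
  _root_.abs_le_max_abs_abs (hf hx ⟨hx.1.trans hx.2, le_rfl⟩ hx.2)
    (hf ⟨le_rfl, hx.1.trans hx.2⟩ hx hx.1)

section Convolution

variable {k g : ℝ → ℝ} {T K M : ℝ}

lemma intervalIntegrable_kernel_reflect (hk : IntegrableOn k (Icc 0 T)) {t : ℝ}
    (ht : t ∈ Icc 0 T) : IntervalIntegrable (fun τ => k (t - τ)) volume 0 t := by
  have hk' : IntervalIntegrable k volume 0 t :=
    (hk.mono_set (by rw [uIcc_of_le ht.1]; exact Icc_subset_Icc le_rfl ht.2)).intervalIntegrable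
  simpa using (hk'.comp_sub_left t).symm

lemma intervalIntegrable_conv_integrand (hk : IntegrableOn k (Icc 0 T))
    (hg : AEStronglyMeasurable g) (hgb : ∀ t ∈ Icc 0 T, |g t| ≤ M) {t : ℝ} (ht : t ∈ Icc 0 T) :
    IntervalIntegrable (fun τ => k (t - τ) * g τ) volume 0 t := by
  have hk' := intervalIntegrable_kernel_reflect hk ht
  rw [intervalIntegrable_iff_integrableOn_Icc_of_le ht.1] at hk' ⊢
  exact hk'.mul_bdd hg.restrict <| ae_restrict_of_forall_mem measurableSet_Icc fun τ hτ =>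
    hgb τ ⟨hτ.1, hτ.2.trans ht.2⟩

lemma integral_kernel_sub_kernel_le (hk : IntegrableOn k (Icc 0 T))
    (hkb : ∀ t ∈ Icc 0 T, |k t| ≤ K) {t₁ t₂ : ℝ} (h₁ : 0 ≤ t₁) (h₁₂ : t₁ ≤ t₂) (h₂ : t₂ ≤ T) :
    (∫ τ in 0..t₁, k (t₁ - τ)) - ∫ τ in 0..t₁, k (t₂ - τ) ≤ 2 * K * (t₂ - t₁) := by
  have hint : ∀ a ∈ Icc 0 T, ∀ b ∈ Icc 0 T, IntervalIntegrable k volume a b :=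
    fun a ha b hb => (hk.mono_set (uIcc_subset_Icc ha hb)).intervalIntegrable
  have hbound : ∀ a ∈ Icc 0 T, ∀ b ∈ Icc 0 T, |∫ τ in a..b, k τ| ≤ K * |b - a| :=
    fun a ha b hb => by
      simpa only [Real.norm_eq_abs] using
        intervalIntegral.norm_integral_le_of_norm_le_const (f := k)
          fun τ hτ => hkb τ (uIcc_subset_Icc ha hb (uIoc_subset_uIcc hτ))
  have h0 : (0 : ℝ) ∈ Icc 0 T := ⟨le_rfl, h₁.trans (h₁₂.trans h₂)⟩
  have ht₁ : t₁ ∈ Icc 0 T := ⟨h₁, h₁₂.trans h₂⟩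
  have ht₂ : t₂ ∈ Icc 0 T := ⟨h₁.trans h₁₂, h₂⟩
  have hd : t₂ - t₁ ∈ Icc 0 T := ⟨by linarith, by linarith⟩
  -- after reflecting both integrals, the difference is `∫₀^{t₂-t₁} k - ∫_{t₁}^{t₂} k`
  rw [intervalIntegral.integral_comp_sub_left (fun u => k u) t₁,
    intervalIntegral.integral_comp_sub_left (fun u => k u) t₂, sub_self, sub_zero, sub_zero,
    intervalIntegral.integral_interval_sub_interval_comm (hint 0 h0 t₁ ht₁)
      (hint _ hd t₂ ht₂) (hint 0 h0 _ hd)]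
  have h₁' := hbound 0 h0 _ hd
  have h₂' := hbound t₁ ht₁ t₂ ht₂
  rw [abs_of_nonneg (by linarith : (0 : ℝ) ≤ t₂ - t₁ - 0)] at h₁'
  rw [abs_of_nonneg (by linarith : (0 : ℝ) ≤ t₂ - t₁)] at h₂'
  linarith [le_abs_self (∫ τ in (0 : ℝ)..t₂ - t₁, k τ), neg_abs_le (∫ τ in t₁..t₂, k τ)]

lemma abs_integral_kernel_sub_kernel_mul_le (hk : AntitoneOn k (Icc 0 T))
    (hgb : ∀ t ∈ Icc 0 T, |g t| ≤ M) {t₁ t₂ : ℝ} (h₁ : 0 ≤ t₁) (h₁₂ : t₁ ≤ t₂) (h₂ : t₂ ≤ T) :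
    |∫ τ in 0..t₁, (k (t₂ - τ) - k (t₁ - τ)) * g τ| ≤
      M * ((∫ τ in 0..t₁, k (t₁ - τ)) - ∫ τ in 0..t₁, k (t₂ - τ)) := by
  have hkI : IntegrableOn k (Icc 0 T) := hk.integrableOn_isCompact isCompact_Icc
  have ht₁ : t₁ ∈ Icc 0 T := ⟨h₁, h₁₂.trans h₂⟩
  have hk₁ := intervalIntegrable_kernel_reflect hkI ht₁
  have hk₂ := (intervalIntegrable_kernel_reflect hkI ⟨h₁.trans h₁₂, h₂⟩).mono_set
    (uIcc_subset_uIcc_left (by rw [uIcc_of_le (h₁.trans h₁₂)]; exact ⟨h₁, h₁₂⟩))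
  rw [← Real.norm_eq_abs, ← intervalIntegral.integral_sub hk₁ hk₂,
    ← intervalIntegral.integral_const_mul]
  refine intervalIntegral.norm_integral_le_of_norm_le h₁ (Eventually.of_forall fun τ hτ => ?_)
    ((hk₁.sub hk₂).const_mul M)
  have hkτ : k (t₂ - τ) ≤ k (t₁ - τ) :=
    hk ⟨by linarith [hτ.2], by linarith [hτ.1]⟩ ⟨by linarith [hτ.2], by linarith [hτ.1]⟩
      (by linarith)
  rw [norm_mul, Real.norm_eq_abs, abs_of_nonpos (sub_nonpos.2 hkτ), neg_sub, mul_comm]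
  exact mul_le_mul_of_nonneg_right (hgb τ ⟨hτ.1.le, hτ.2.trans ht₁.2⟩) (sub_nonneg.2 hkτ)

lemma abs_conv_sub_conv_le (hk : AntitoneOn k (Icc 0 T)) (hkb : ∀ t ∈ Icc 0 T, |k t| ≤ K)
    (hg : AEStronglyMeasurable g) (hgb : ∀ t ∈ Icc 0 T, |g t| ≤ M) {t₁ t₂ : ℝ} (h₁ : 0 ≤ t₁)
    (h₁₂ : t₁ ≤ t₂) (h₂ : t₂ ≤ T) :
    |conv k g t₂ - conv k g t₁| ≤ 3 * K * M * (t₂ - t₁) := by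
  have hkI : IntegrableOn k (Icc 0 T) := hk.integrableOn_isCompact isCompact_Icc
  have ht₁ : t₁ ∈ Icc 0 T := ⟨h₁, h₁₂.trans h₂⟩
  have ht₂ : t₂ ∈ Icc 0 T := ⟨h₁.trans h₁₂, h₂⟩
  have hM : 0 ≤ M := (abs_nonneg _).trans (hgb t₁ ht₁)
  have hI₁ := intervalIntegrable_conv_integrand hkI hg hgb ht₁
  have hI₂ := intervalIntegrable_conv_integrand hkI hg hgb ht₂
  have hI₂old : IntervalIntegrable (fun τ => k (t₂ - τ) * g τ) volume 0 t₁ :=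
    hI₂.mono_set (uIcc_subset_uIcc_left (by rw [uIcc_of_le (h₁.trans h₁₂)]; exact ⟨h₁, h₁₂⟩))
  have hI₂new : IntervalIntegrable (fun τ => k (t₂ - τ) * g τ) volume t₁ t₂ :=
    hI₂.mono_set (uIcc_subset_uIcc_right (by rw [uIcc_of_le (h₁.trans h₁₂)]; exact ⟨h₁, h₁₂⟩))
  have hsplit : conv k g t₂ - conv k g t₁ = (∫ τ in t₁..t₂, k (t₂ - τ) * g τ) +
      ∫ τ in 0..t₁, (k (t₂ - τ) - k (t₁ - τ)) * g τ := by
    simp only [conv, sub_mul]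
    rw [← intervalIntegral.integral_add_adjacent_intervals hI₂old hI₂new,
      intervalIntegral.integral_sub hI₂old hI₁]
    ring
  have hnew : |∫ τ in t₁..t₂, k (t₂ - τ) * g τ| ≤ K * M * (t₂ - t₁) := by
    have := intervalIntegral.norm_integral_le_of_norm_le_const
      (f := fun τ => k (t₂ - τ) * g τ) (C := K * M) (a := t₁) (b := t₂) fun τ hτ => by
        rw [uIoc_of_le h₁₂] at hτ
        rw [norm_mul]
        exact mul_le_mul (hkb _ ⟨by linarith [hτ.2], by linarith [hτ.1]⟩)
          (hgb _ ⟨by linarith [hτ.1], by linarith [hτ.2]⟩) (norm_nonneg _)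
          ((abs_nonneg _).trans (hkb t₁ ht₁))
    rwa [Real.norm_eq_abs, abs_of_nonneg (sub_nonneg.2 h₁₂)] at this
  have hold := abs_integral_kernel_sub_kernel_mul_le hk hgb h₁ h₁₂ h₂
  have hkern := integral_kernel_sub_kernel_le hkI hkb h₁ h₁₂ h₂
  calc |conv k g t₂ - conv k g t₁|
      ≤ K * M * (t₂ - t₁) + M * ((∫ τ in 0..t₁, k (t₁ - τ)) - ∫ τ in 0..t₁, k (t₂ - τ)) := by
        rw [hsplit]; exact (abs_add_le _ _).trans (add_le_add hnew hold)
    _ ≤ K * M * (t₂ - t₁) + M * (2 * K * (t₂ - t₁)) := by gcongr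
    _ = 3 * K * M * (t₂ - t₁) := by ring

lemma lipschitzOnWith_conv (hk : AntitoneOn k (Icc 0 T)) (hkb : ∀ t ∈ Icc 0 T, |k t| ≤ K)
    (hg : AEStronglyMeasurable g) (hgb : ∀ t ∈ Icc 0 T, |g t| ≤ M) :
    LipschitzOnWith (3 * K * M).toNNReal (conv k g) (Icc 0 T) := by
  refine LipschitzOnWith.of_dist_le' fun x hx y hy => ?_
  rw [Real.dist_eq, Real.dist_eq]
  rcases le_total x y with hxy | hyx
  · rw [abs_sub_comm, abs_sub_comm x, abs_of_nonneg (sub_nonneg.2 hxy)]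
    exact abs_conv_sub_conv_le hk hkb hg hgb hx.1 hxy hy.2
  · rw [abs_of_nonneg (sub_nonneg.2 hyx)]
    exact abs_conv_sub_conv_le hk hkb hg hgb hy.1 hyx hx.2

end Convolution

section Shift

variable {k g : ℝ → ℝ} {s δ : ℝ}

lemma conv_add_eq_integral_add_conv_shift (hs : 0 ≤ s) (hδ : 0 ≤ δ)
    (hint : IntervalIntegrable (fun τ => k (s + δ - τ) * g τ) volume 0 (s + δ)) :
    conv k g (s + δ) =
      (∫ τ in 0..δ, k (s + δ - τ) * g τ) + conv k (fun σ => g (σ + δ)) s := by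
  have hδ_mem : δ ∈ uIcc 0 (s + δ) := by rw [uIcc_of_le (by linarith)]; exact ⟨hδ, by linarith⟩
  rw [conv, ← intervalIntegral.integral_add_adjacent_intervals
    (hint.mono_set (uIcc_subset_uIcc_left hδ_mem)) (hint.mono_set (uIcc_subset_uIcc_right hδ_mem))]
  have hshift := intervalIntegral.integral_comp_add_right (fun τ => k (s + δ - τ) * g τ)
    (a := 0) (b := s) δ
  simp only [zero_add, add_sub_add_right_eq_sub] at hshift
  rw [conv, hshift]

lemma antitoneOn_integral_history {T : ℝ} (hk : AntitoneOn k (Icc 0 T)) (hδ : 0 ≤ δ)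
    (hg : ∀ᵐ τ ∂volume.restrict (Ioo 0 δ), 0 ≤ g τ)
    (hint : ∀ s ∈ Icc 0 (T - δ), IntervalIntegrable (fun τ => k (s + δ - τ) * g τ) volume 0 δ) :
    AntitoneOn (fun s => ∫ τ in 0..δ, k (s + δ - τ) * g τ) (Icc 0 (T - δ)) := by
  intro s₁ hs₁ s₂ hs₂ h₁₂
  refine intervalIntegral.integral_mono_ae_restrict hδ (hint s₂ hs₂) (hint s₁ hs₁) ?_
  rw [Measure.restrict_congr_set Ioo_ae_eq_Icc.symm]
  filter_upwards [hg, ae_restrict_mem measurableSet_Ioo] with τ hgτ hτ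
  exact mul_le_mul_of_nonneg_right (hk ⟨by linarith [hs₁.1, hτ.2], by linarith [hs₁.2, hτ.1]⟩
    ⟨by linarith [hs₂.1, hτ.2], by linarith [hs₂.2, hτ.1]⟩ (by linarith)) hgτ

lemma antitoneOn_conv_add_sub_conv_shift {T : ℝ} (hk : AntitoneOn k (Icc 0 T)) (hδ : 0 ≤ δ)
    (hg : ∀ᵐ τ ∂volume.restrict (Ioo 0 δ), 0 ≤ g τ)
    (hint : ∀ t ∈ Icc 0 T, IntervalIntegrable (fun τ => k (t - τ) * g τ) volume 0 t) :
    AntitoneOn ((fun s => conv k g (s + δ)) - conv k fun σ => g (σ + δ)) (Icc 0 (T - δ)) := by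
  have hmem : ∀ s ∈ Icc 0 (T - δ), s + δ ∈ Icc 0 T :=
    fun s hs => ⟨by linarith [hs.1], by linarith [hs.2]⟩
  have hhist := antitoneOn_integral_history hk hδ hg fun s hs =>
    (hint _ (hmem s hs)).mono_set <| uIcc_subset_uIcc_left <| by
      rw [uIcc_of_le (hmem s hs).1]; exact ⟨hδ, by linarith [hs.1]⟩
  refine hhist.congr fun s hs => ?_
  rw [Pi.sub_apply, conv_add_eq_integral_add_conv_shift hs.1 hδ (hint _ (hmem s hs))]
  ring

end Shift

section Differentiability

variable {f h : ℝ → ℝ} {s : Set ℝ}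

lemma LipschitzOnWith.ae_differentiableAt_of_isOpen {C : NNReal} (hf : LipschitzOnWith C f s)
    (hs : IsOpen s) : ∀ᵐ x ∂volume.restrict s, DifferentiableAt ℝ f x := by
  filter_upwards [hf.ae_differentiableWithinAt_real hs.measurableSet,
    ae_restrict_mem hs.measurableSet] with x hx hxs
  exact hx.differentiableAt (hs.mem_nhds hxs)

lemma AntitoneOn.ae_differentiableAt_of_isOpen (hf : AntitoneOn f s) (hs : IsOpen s) :
    ∀ᵐ x ∂volume.restrict s, DifferentiableAt ℝ f x := by
  filter_upwards [hf.neg.ae_differentiableWithinAt hs.measurableSet,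
    ae_restrict_mem hs.measurableSet] with x hx hxs
  simpa using (hx.differentiableAt (hs.mem_nhds hxs)).neg

lemma deriv_le_deriv_of_antitoneOn_sub {x : ℝ} (hs : s ∈ 𝓝 x) (hfh : AntitoneOn (f - h) s)
    (hf : DifferentiableAt ℝ f x) (hh : DifferentiableAt ℝ h x) : deriv f x ≤ deriv h x := by
  have := hfh.derivWithin_nonpos (x := x)
  rw [derivWithin_of_mem_nhds hs, deriv_sub hf hh] at this
  linarith

end Differentiability

theorem time_shift_property_general
    (T : ℝ)
    (k : ℝ → ℝ)
    (hkmono : AntitoneOn k (Set.Icc 0 T))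
    (δ₁ : ℝ) (hδ₁ : δ₁ ∈ Set.Ioo 0 T)
    (W₀ : ℝ) (W : ℝ → ℝ) (hWmeas : Measurable W)
    (hWbd : ∃ M : ℝ, ∀ t ∈ Set.Icc (0:ℝ) T, |W t| ≤ M)
    (hWlower : ∀ᵐ t ∂(volume.restrict (Set.Ioo (0:ℝ) δ₁)), W₀ ≤ W t) :
    ∀ᵐ s ∂(volume.restrict (Set.Ioo (0:ℝ) (T - δ₁))),
      deriv (conv k (fun τ => W τ - W₀)) (s + δ₁) ≤
        deriv (conv k (fun σ => W (σ + δ₁) - W₀)) s := by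
  obtain ⟨M, hM⟩ := hWbd
  obtain ⟨hδ₀, hδT⟩ := hδ₁
  have hgb : ∀ t ∈ Icc 0 T, |W t - W₀| ≤ M + |W₀| := fun t ht =>
    (abs_sub _ _).trans (by linarith [hM t ht])
  have hsub : Icc 0 (T - δ₁) ⊆ Icc 0 T := Icc_subset_Icc le_rfl (by linarith)
  have hG : LipschitzOnWith _ (conv k fun σ => W (σ + δ₁) - W₀) (Icc 0 (T - δ₁)) :=
    lipschitzOnWith_conv (hkmono.mono hsub) (fun t ht => hkmono.abs_le_max_abs_abs (hsub ht))
      ((hWmeas.comp (measurable_add_const δ₁)).sub measurable_const).aestronglyMeasurable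
      fun t ht => hgb _ ⟨by linarith [ht.1], by linarith [ht.2]⟩
  have hFG := antitoneOn_conv_add_sub_conv_shift hkmono hδ₀.le
    (hWlower.mono fun τ => sub_nonneg.2) fun t ht =>
      intervalIntegrable_conv_integrand (hkmono.integrableOn_isCompact isCompact_Icc)
        (hWmeas.sub measurable_const).aestronglyMeasurable hgb ht
  filter_upwards [(hG.mono Ioo_subset_Icc_self).ae_differentiableAt_of_isOpen isOpen_Ioo,
    (hFG.mono Ioo_subset_Icc_self).ae_differentiableAt_of_isOpen isOpen_Ioo,
    ae_restrict_mem measurableSet_Ioo] with s hGs hFGs hs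
  rw [← deriv_comp_add_const]
  exact deriv_le_deriv_of_antitoneOn_sub (Icc_mem_nhds hs.1 hs.2) hFG
    (by simpa only [Pi.sub_apply, sub_add_cancel] using hFGs.add hGs) hGs

/-- Time-shift property of the nonlocal derivative for nonincreasing kernels. -/
theorem time_shift_property
    (T : ℝ) (hT : 0 < T)
    (k k' : ℝ → ℝ)
    (hk' : IntegrableOn k' (Set.Icc 0 T))
    (hkAC : ∀ t ∈ Set.Icc (0:ℝ) T, k t = k 0 + ∫ τ in (0:ℝ)..t, k' τ)
    (hknn : ∀ t ∈ Set.Icc (0:ℝ) T, 0 ≤ k t)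
    (hkmono : AntitoneOn k (Set.Icc 0 T))
    (δ₁ : ℝ) (hδ₁ : δ₁ ∈ Set.Ioo 0 T)
    (W₀ : ℝ) (W : ℝ → ℝ) (hWmeas : Measurable W)
    (hWbd : ∃ M : ℝ, ∀ t ∈ Set.Icc (0:ℝ) T, |W t| ≤ M)
    (hWlower : ∀ᵐ t ∂(volume.restrict (Set.Ioo (0:ℝ) δ₁)), W₀ ≤ W t) :
    ∀ᵐ s ∂(volume.restrict (Set.Ioo (0:ℝ) (T - δ₁))),
      deriv (conv k (fun τ => W τ - W₀)) (s + δ₁) ≤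
        deriv (conv k (fun σ => W (σ + δ₁) - W₀)) s :=
  time_shift_property_general T k hkmono δ₁ hδ₁ W₀ W hWmeas hWbd hWlower
end
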